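/- Let T be a binary tree with m nodes, of which m_0 are leaves, and with root u. For a node v, let l_v be the length of the right spine of v's left child (0 if no left child) and r_v the length of the left spine of v's right child (0 if no right child); let L_u, R_u be the lengths of the left and right spines of u. Then the sum over all nodes v in T of (l_v + r_v) equals 2m − L_u − R_u, and the sum over all v of max(l_v + r_v − 1, 0) is at most m − L_u − R_u + m_0. -/

import Mathlib

inductive BT where
  | leaf : BT
  | node : BT → BT → BT
deriving DecidableEq

namespace BT

/-- Number of nodes. -/
def size : BT → ℕ
  | leaf => 0
  | node l r => l.size + r.size + 1

/-- Inorder list of node positions (paths from the root; `false` = left step). -/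
def inList : BT → List (List Bool)
  | leaf => []
  | node l r => (l.inList).map (List.cons false) ++ [] :: (r.inList).map (List.cons true)

/-- Preorder list of node positions. -/
def preList : BT → List (List Bool)
  | leaf => []
  | node l r => [] :: ((l.preList).map (List.cons false) ++ (r.preList).map (List.cons true))

/-- Subtree rooted at a given position, if the position is valid. -/
def subtree? : BT → List Bool → Option BT
  | t, [] => some t
  | leaf, _ :: _ => none
  | node l r, b :: p => if b then r.subtree? p else l.subtree? p

/-- Size of the left spine (maximal path following left children, top node included). -/
def Lspine : BT → ℕ
  | leaf => 0
  | node l _ => l.Lspine + 1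

/-- Size of the right spine. -/
def Rspine : BT → ℕ
  | leaf => 0
  | node _ r => r.Rspine + 1

/-- Size of the left inner spine of the root: right spine of the left child. -/
def lv : BT → ℕ
  | leaf => 0
  | node l _ => l.Rspine

/-- Size of the right inner spine of the root: left spine of the right child. -/
def rv : BT → ℕ
  | leaf => 0
  | node _ r => r.Lspine

/-- Sum of `f` over all (sub)trees rooted at nodes of the tree. -/
def sumNodes (f : BT → ℕ) : BT → ℕ
  | leaf => 0
  | node l r => f (node l r) + sumNodes f l + sumNodes f r

/-- Number of leaf nodes (nodes with no children). -/
def leaves : BT → ℕ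
  | leaf => 0
  | node leaf leaf => 1
  | node l r => leaves l + leaves r

end BT

/-- Longest common prefix of two paths: the LCA of two positions in a binary tree. -/
def lcp : List Bool → List Bool → List Bool
  | a :: p, b :: q => if a = b then a :: lcp p q else []
  | _, _ => []

/-- Index of the minimum element of a list (0 if empty). -/
def minIdx {α : Type*} [LinearOrder α] (l : List α) : ℕ :=
  match l.argmin id with
  | none => 0
  | some a => l.idxOf a

/-- Cartesian tree construction with fuel. -/
def cartesianAux {α : Type*} [LinearOrder α] : ℕ → List α → BT
  | 0, _ => .leaf
  | _ + 1, [] => .leaf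
  | n + 1, l@(_ :: _) =>
      .node (cartesianAux n (l.take (minIdx l))) (cartesianAux n (l.drop (minIdx l + 1)))

/-- The Cartesian tree of a list: root at the position of the minimum,
recursively built on the prefix before and the suffix after the minimum. -/
def cartesian {α : Type*} [LinearOrder α] (l : List α) : BT :=
  cartesianAux l.length l

/-- `k` is the position of the minimum of `A` on the range `[i, j]`. -/
def isArgmin {α : Type*} [LinearOrder α] {n : ℕ} (A : Fin n → α) (i j k : Fin n) : Prop :=
  i ≤ k ∧ k ≤ j ∧ ∀ m, i ≤ m → m ≤ j → A k ≤ A m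

/-- `k` is the position of the second smallest element of `A` on the range `[i, j]`. -/
def isSecondMin {α : Type*} [LinearOrder α] {n : ℕ} (A : Fin n → α) (i j k : Fin n) : Prop :=
  i ≤ k ∧ k ≤ j ∧
    ∃ m, isArgmin A i j m ∧ k ≠ m ∧ ∀ l, i ≤ l → l ≤ j → l ≠ m → A k ≤ A l

/-- The node with inorder number `i` in `t` has a left child. -/
def hasLeftChildAt (t : BT) (i : ℕ) : Prop :=
  ∃ (p : List Bool) (ll lr r : BT),
    t.inList[i]? = some p ∧ t.subtree? p = some (.node (.node ll lr) r)

/-! Truncated subtraction lowers `l_v + r_v` by one at every node where it is positive, and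
`l_v + r_v = 0` holds exactly at the nodes without children; so the second sum is the first one
minus `m - m₀`, and the inequality is in fact an equality. The first sum is computed by induction:
the inner spines of the root are the outer spines of its children. -/

namespace BT

theorem sumNodes_tsub_one_add_size (f : BT → ℕ) (t : BT) :
    t.sumNodes (fun v => f v - 1) + t.size =
      t.sumNodes f + t.sumNodes (fun v => if f v = 0 then 1 else 0) := by
  induction t with
  | leaf => rfl
  | node l r ihl ihr =>
    simp only [sumNodes, size]
    split_ifs <;> omega

theorem leaves_eq_sumNodes (t : BT) :
    t.leaves = t.sumNodes (fun v => if v.lv + v.rv = 0 then 1 else 0) := by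
  induction t with
  | leaf => rfl
  | node l r ihl ihr =>
    rcases l with _ | ⟨a, b⟩ <;> rcases r with _ | ⟨c, d⟩ <;>
      simp_all [leaves, sumNodes, lv, rv, Lspine, Rspine]

theorem sumNodes_lv_add_rv_add_Lspine_add_Rspine (t : BT) :
    t.sumNodes (fun v => v.lv + v.rv) + t.Lspine + t.Rspine = 2 * t.size := by
  induction t with
  | leaf => rfl
  | node l r ihl ihr =>
    simp only [sumNodes, lv, rv, Lspine, Rspine, size] at ihl ihr ⊢
    omega

end BT

theorem stmt6_general (t : BT) :
    t.sumNodes (fun v => v.lv + v.rv) + t.Lspine + t.Rspine = 2 * t.size ∧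
    t.sumNodes (fun v => v.lv + v.rv - 1) + t.Lspine + t.Rspine ≤ t.size + t.leaves := by
  have hsum := t.sumNodes_lv_add_rv_add_Lspine_add_Rspine
  have hdrop := t.sumNodes_tsub_one_add_size (fun v => v.lv + v.rv)
  rw [← t.leaves_eq_sumNodes] at hdrop
  exact ⟨hsum, by omega⟩

/-- For a nonempty binary tree `t` with `m` nodes, `m₀` leaves and root `u`:
`∑_v (l_v + r_v) = 2m − L_u − R_u` and `∑_v max(l_v + r_v − 1, 0) ≤ m − L_u − R_u + m₀`
(stated additively to avoid truncated subtraction). -/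
theorem stmt6 (t : BT) (ht : t ≠ .leaf) :
    t.sumNodes (fun v => v.lv + v.rv) + t.Lspine + t.Rspine = 2 * t.size ∧
    t.sumNodes (fun v => v.lv + v.rv - 1) + t.Lspine + t.Rspine ≤ t.size + t.leaves :=
  stmt6_general t
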